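/- Let t > 0 and let (r(n)) be a sequence of nonnegative integers with r(n)/√n → t as n → ∞. Place r = r(n) distinguishable rooks independently and uniformly at random on B_n. Then the expected numbers of alignments satisfy E(W_RC + W_CR) → (2/3)t² and E(W_RR + W_RC + W_CR) → (4/3)t² as n → ∞. -/

import Mathlib

open Finset Filter

/-- The triangular board `B_n = {(i,j) : 1 ≤ i < j ≤ n}`. -/
def board (n : ℕ) : Finset (ℕ × ℕ) :=
  (Finset.range (n + 1) ×ˢ Finset.range (n + 1)).filter fun p => 1 ≤ p.1 ∧ p.1 < p.2

/-- Expectation of an `ℕ`-valued statistic of a uniform random placement of `r` rooks on `B_n`;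
a placement is a function `Fin r → ℕ × ℕ`, rook `a` sitting on the square `f a = (row, column)`. -/
noncomputable def rookExp (n r : ℕ) (W : (Fin r → ℕ × ℕ) → ℕ) : ℝ :=
  (∑ f ∈ Fintype.piFinset (fun _ : Fin r => board n), (W f : ℝ)) / ((board n).card : ℝ) ^ r

/-- Number of (unordered) pairs of rooks lying in the same row. -/
def WRR (r : ℕ) (f : Fin r → ℕ × ℕ) : ℕ :=
  (Finset.univ.filter fun p : Fin r × Fin r => p.1 < p.2 ∧ (f p.1).1 = (f p.2).1).card

/-- Number of ordered pairs `a < b` with the column of rook `a` equal to the row of rook `b`. -/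
def WRC (r : ℕ) (f : Fin r → ℕ × ℕ) : ℕ :=
  (Finset.univ.filter fun p : Fin r × Fin r => p.1 < p.2 ∧ (f p.1).2 = (f p.2).1).card

/-- Number of ordered pairs `a < b` with the row of rook `a` equal to the column of rook `b`. -/
def WCR (r : ℕ) (f : Fin r → ℕ × ℕ) : ℕ :=
  (Finset.univ.filter fun p : Fin r × Fin r => p.1 < p.2 ∧ (f p.1).1 = (f p.2).2).card

/-!
Linearity of expectation: each of the `r(r-1)` ordered pairs of distinct rooks sits on an
independent uniform pair of squares of `B_n`, so with `N = |B_n| = n(n-1)/2`,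
`E(W_RC + W_CR) = r(r-1) K_RC / N²` and `2 E(W_RR) = r(r-1) K_RR / N²`, where `K_RC` and `K_RR`
count the ordered pairs of squares `(x, y)` with `col x = row y`, resp. `row x = row y`.
Counting through the row of `y` gives `K_RC = n(n-1)(n-2)/6` and `K_RR = n(n-1)(2n-1)/6`, hence
`E(W_RC + W_CR) = (2/3) (r(r-1)/n) (1 - 1/(n-1))` and `E(W_RR) = (1/3) (r(r-1)/n) (2 + 1/(n-1))`;
finally `r(r-1)/n → t²`.
-/

lemma card_filter_offDiag_univ {ι : Type*} [Fintype ι] [LinearOrder ι] (P : ι → ι → Prop)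
    [DecidableRel P] :
    #{p ∈ (univ : Finset ι).offDiag | P p.1 p.2}
      = #{p : ι × ι | p.1 < p.2 ∧ P p.1 p.2} + #{p : ι × ι | p.1 < p.2 ∧ P p.2 p.1} := by
  have hsplit : {p ∈ (univ : Finset ι).offDiag | P p.1 p.2}
      = {p ∈ (univ : Finset (ι × ι)) | p.1 < p.2 ∧ P p.1 p.2}
        ∪ {p ∈ (univ : Finset (ι × ι)) | p.2 < p.1 ∧ P p.1 p.2} := by
    ext p
    simp only [mem_filter, mem_offDiag, mem_univ, true_and, mem_union, ne_iff_lt_or_gt]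
    tauto
  rw [hsplit, card_union_of_disjoint (disjoint_filter.2 fun p _ h h' ↦ lt_asymm h.1 h'.1)]
  congr 1
  exact card_equiv (Equiv.prodComm ι ι) (by simp)

namespace Fintype
variable {ι α : Type*} [Fintype ι] [DecidableEq ι] [DecidableEq α]

lemma card_filter_piFinset_const_eq_pair {s : Finset α} {a b : ι} (hab : a ≠ b) {x y : α}
    (hx : x ∈ s) (hy : y ∈ s) :
    #{f ∈ piFinset fun _ : ι ↦ s | (f a, f b) = (x, y)} = #s ^ (card ι - 2) := by
  have ha : a ∈ univ.erase b := mem_erase.2 ⟨hab, mem_univ a⟩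
  have hfilter : {f ∈ piFinset fun _ : ι ↦ s | (f a, f b) = (x, y)}
      = {f ∈ piFinset (Function.update (fun _ : ι ↦ s) a {x}) | f b = y} := by
    rw [piFinset_update_singleton_eq_filter_piFinset_eq _ _ hx, filter_filter]
    simp only [Prod.mk.injEq]
  have hrest : ∀ j ∈ (univ.erase b).erase a, #(Function.update (fun _ ↦ s) a {x} j) = #s :=
    fun j hj ↦ by rw [Function.update_of_ne (ne_of_mem_erase hj)]
  rw [hfilter, card_filter_piFinset_eq_of_mem (α := fun _ ↦ α) _ _
      (by simpa [Function.update_of_ne hab.symm]), ← mul_prod_erase _ _ ha,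
    Function.update_self, card_singleton, one_mul, Finset.prod_congr rfl hrest, prod_const,
    card_erase_of_mem ha, card_erase_of_mem (mem_univ b), card_univ, Nat.sub_sub]

lemma sum_piFinset_const_apply_apply {M : Type*} [AddCommMonoid M] (s : Finset α) {a b : ι}
    (hab : a ≠ b) (g : α → α → M) :
    ∑ f ∈ piFinset fun _ : ι ↦ s, g (f a) (f b) = #s ^ (card ι - 2) • ∑ x ∈ s, ∑ y ∈ s, g x y := by
  refine (sum_fiberwise_of_maps_to' (g := fun f : ι → α ↦ (f a, f b)) (t := s ×ˢ s)
      (fun f hf ↦ mem_product.2 ⟨mem_piFinset.1 hf a, mem_piFinset.1 hf b⟩)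
      (fun p ↦ g p.1 p.2)).symm.trans ?_
  rw [sum_product, smul_sum]
  refine Finset.sum_congr rfl fun x hx ↦ ?_
  rw [smul_sum]
  refine Finset.sum_congr rfl fun y hy ↦ ?_
  rw [Finset.sum_const, card_filter_piFinset_const_eq_pair hab hx hy]

lemma sum_card_filter_offDiag_piFinset (s : Finset α) (C : α → α → Prop) [DecidableRel C] :
    ∑ f ∈ piFinset fun _ : ι ↦ s, #{p ∈ (univ : Finset ι).offDiag | C (f p.1) (f p.2)}
      = card ι * (card ι - 1) * #s ^ (card ι - 2) * #{q ∈ s ×ˢ s | C q.1 q.2} := by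
  simp_rw [card_filter]
  have hpair : ∀ p ∈ (univ : Finset ι).offDiag,
      ∑ f ∈ piFinset fun _ : ι ↦ s, (if C (f p.1) (f p.2) then 1 else 0)
        = #s ^ (card ι - 2) * ∑ q ∈ s ×ˢ s, if C q.1 q.2 then 1 else 0 := fun p hp ↦ by
    rw [sum_piFinset_const_apply_apply s (mem_offDiag.1 hp).2.2
      fun x y ↦ if C x y then 1 else 0, sum_product, smul_eq_mul]
  rw [Finset.sum_comm, Finset.sum_congr rfl hpair, Finset.sum_const, offDiag_card, card_univ,
    smul_eq_mul, ← Nat.mul_sub_one]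
  ring

end Fintype

lemma mem_board {n : ℕ} {x : ℕ × ℕ} : x ∈ board n ↔ 1 ≤ x.1 ∧ x.1 < x.2 ∧ x.2 ≤ n := by
  simp only [board, mem_filter, mem_product, mem_range]
  omega

lemma board_zero : board 0 = ∅ := rfl

lemma card_board_pos {n : ℕ} (hn : 2 ≤ n) : 0 < #(board n) :=
  card_pos.2 ⟨(1, 2), mem_board.2 ⟨le_rfl, one_lt_two, hn⟩⟩

lemma sum_board_succ {M : Type*} [AddCommMonoid M] (n : ℕ) (F : ℕ × ℕ → M) :
    ∑ x ∈ board (n + 1), F x = ∑ x ∈ board n, F x + ∑ k ∈ range n, F (k + 1, n + 1) := by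
  have hsucc : board (n + 1) = board n ∪ (range n).image fun k ↦ (k + 1, n + 1) := by
    ext x
    simp only [mem_board, mem_union, mem_image, mem_range]
    constructor
    · intro hx
      by_cases h : x.2 ≤ n
      · exact Or.inl ⟨hx.1, hx.2.1, h⟩
      · exact Or.inr ⟨x.1 - 1, by omega, by ext <;> simp <;> omega⟩
    · rintro (hx | ⟨k, hk, rfl⟩) <;> omega
  have hdisj : Disjoint (board n) ((range n).image fun k ↦ (k + 1, n + 1)) := by
    simp only [disjoint_left, mem_board, mem_image, not_exists, not_and]
    rintro x hx k - rfl
    omega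
  rw [hsucc, sum_union hdisj, sum_image fun k _ l _ h ↦ by simpa using h]

lemma card_board (n : ℕ) : (#(board n) : ℝ) = n * (n - 1) / 2 := by
  induction n with
  | zero => simp [board_zero]
  | succ n ih =>
    rw [card_eq_sum_ones, Nat.cast_sum, sum_board_succ, ← Nat.cast_sum, ← card_eq_sum_ones, ih]
    simp only [Nat.cast_one, sum_const, card_range, nsmul_eq_mul, mul_one, Nat.cast_add,
      add_sub_cancel_right]
    ring

lemma sum_board_sub_snd (n : ℕ) :
    ∑ x ∈ board n, ((n : ℝ) - x.2) = n * (n - 1) * (n - 2) / 6 := by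
  induction n with
  | zero => simp [board_zero]
  | succ n ih =>
    rw [sum_board_succ]
    simp only [Nat.cast_add, Nat.cast_one, sub_self, sum_const_zero, add_zero]
    simp only [add_sub_right_comm _ (1 : ℝ), sum_add_distrib, ih, sum_const, nsmul_one, card_board]
    ring

lemma sum_range_natCast (n : ℕ) : ∑ k ∈ range n, (k : ℝ) = n * (n - 1) / 2 := by
  induction n with
  | zero => simp
  | succ n ih => rw [sum_range_succ, ih]; push_cast; ring

lemma sum_board_sub_fst (n : ℕ) :
    ∑ x ∈ board n, ((n : ℝ) - x.1) = n * (n - 1) * (2 * n - 1) / 6 := by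
  induction n with
  | zero => simp [board_zero]
  | succ n ih =>
    have hcol : ∑ k ∈ range n, ((n : ℝ) + 1 - (k + 1 : ℕ)) = n * (n + 1) / 2 := by
      simp only [Nat.cast_add, Nat.cast_one, add_sub_add_right_eq_sub, sum_sub_distrib,
        sum_range_natCast, sum_const, card_range, nsmul_eq_mul]
      ring
    rw [sum_board_succ]
    push_cast at hcol ⊢
    rw [hcol]
    simp only [add_sub_right_comm _ (1 : ℝ), sum_add_distrib, ih, sum_const, nsmul_one, card_board]
    ring

lemma card_filter_board_fst_eq {n i : ℕ} (hi : 1 ≤ i) : #{y ∈ board n | i = y.1} = n - i := by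
  have : {y ∈ board n | i = y.1} = {i} ×ˢ Ioc i n := by
    ext y
    simp only [mem_filter, mem_board, mem_product, mem_singleton, mem_Ioc]
    omega
  rw [this, card_product, card_singleton, one_mul, Nat.card_Ioc]

lemma card_filter_board_product (n : ℕ) (g : ℕ × ℕ → ℕ) (hg : ∀ x ∈ board n, 1 ≤ g x ∧ g x ≤ n) :
    (#{q ∈ board n ×ˢ board n | g q.1 = q.2.1} : ℝ) = ∑ x ∈ board n, ((n : ℝ) - g x) := by
  rw [card_filter, sum_product, Nat.cast_sum]
  refine sum_congr rfl fun x hx ↦ ?_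
  rw [← card_filter, card_filter_board_fst_eq (hg x hx).1, Nat.cast_sub (hg x hx).2]

lemma WRC_add_WCR (r : ℕ) (f : Fin r → ℕ × ℕ) :
    WRC r f + WCR r f = #{p ∈ (univ : Finset (Fin r)).offDiag | (f p.1).2 = (f p.2).1} := by
  rw [card_filter_offDiag_univ fun a b ↦ (f a).2 = (f b).1, WRC, WCR]
  simp only [eq_comm]

lemma two_mul_WRR (r : ℕ) (f : Fin r → ℕ × ℕ) :
    2 * WRR r f = #{p ∈ (univ : Finset (Fin r)).offDiag | (f p.1).1 = (f p.2).1} := by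
  rw [card_filter_offDiag_univ fun a b ↦ (f a).1 = (f b).1, WRR]
  simp only [two_mul, eq_comm]

lemma rookExp_add (n r : ℕ) (W₁ W₂ : (Fin r → ℕ × ℕ) → ℕ) :
    rookExp n r (fun f ↦ W₁ f + W₂ f) = rookExp n r W₁ + rookExp n r W₂ := by
  simp only [rookExp, Nat.cast_add, sum_add_distrib, add_div]

lemma rookExp_const_mul (n r c : ℕ) (W : (Fin r → ℕ × ℕ) → ℕ) :
    rookExp n r (fun f ↦ c * W f) = c * rookExp n r W := by
  simp only [rookExp, Nat.cast_mul, ← mul_sum, mul_div_assoc]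

lemma rookExp_card_filter_offDiag {n : ℕ} (hn : 2 ≤ n) (r : ℕ) (C : ℕ × ℕ → ℕ × ℕ → Prop)
    [DecidableRel C] :
    rookExp n r (fun f ↦ #{p ∈ (univ : Finset (Fin r)).offDiag | C (f p.1) (f p.2)})
      = r * (r - 1) * #{q ∈ board n ×ˢ board n | C q.1 q.2} / (#(board n) : ℝ) ^ 2 := by
  rw [rookExp, ← Nat.cast_sum, Fintype.sum_card_filter_offDiag_piFinset, Fintype.card_fin]
  rcases lt_or_ge r 2 with hr | hr
  · interval_cases r <;> simp
  have hN : (#(board n) : ℝ) ≠ 0 := by exact_mod_cast (card_board_pos hn).ne'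
  obtain ⟨k, rfl⟩ : ∃ k, r = k + 2 := ⟨r - 2, by omega⟩
  simp only [Nat.add_sub_cancel, pow_add, Nat.add_sub_assoc one_le_two]
  push_cast
  field_simp
  ring

lemma rookExp_WRC_add_WCR {n : ℕ} (hn : 2 ≤ n) (r : ℕ) :
    rookExp n r (fun f ↦ WRC r f + WCR r f)
      = 2 / 3 * (r * (r - 1) / n) * (1 - 1 / (n - 1)) := by
  simp_rw [WRC_add_WCR]
  rw [rookExp_card_filter_offDiag hn r fun x y ↦ x.2 = y.1, card_filter_board_product n Prod.snd
    fun x hx ↦ by have := mem_board.1 hx; omega, sum_board_sub_snd, card_board]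
  have hn' : (2 : ℝ) ≤ n := by exact_mod_cast hn
  have : (n : ℝ) - 1 ≠ 0 := by linarith
  have : (n : ℝ) ≠ 0 := by linarith
  field_simp
  ring

lemma rookExp_WRR {n : ℕ} (hn : 2 ≤ n) (r : ℕ) :
    rookExp n r (WRR r) = 1 / 3 * (r * (r - 1) / n) * (2 + 1 / (n - 1)) := by
  have h := rookExp_const_mul n r 2 (WRR r)
  simp_rw [two_mul_WRR] at h
  rw [rookExp_card_filter_offDiag hn r fun x y ↦ x.1 = y.1, card_filter_board_product n Prod.fst
    fun x hx ↦ by have := mem_board.1 hx; omega, sum_board_sub_fst, card_board] at h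
  have hn' : (2 : ℝ) ≤ n := by exact_mod_cast hn
  have : (n : ℝ) - 1 ≠ 0 := by linarith
  have : (n : ℝ) ≠ 0 := by linarith
  rw [Nat.cast_ofNat] at h
  rw [← mul_right_inj' (two_ne_zero' ℝ), ← h]
  field_simp
  ring

lemma tendsto_mul_sub_one_div_of_tendsto_div_sqrt {r : ℕ → ℕ} {t : ℝ}
    (h : Tendsto (fun n : ℕ ↦ (r n : ℝ) / √n) atTop (nhds t)) :
    Tendsto (fun n : ℕ ↦ (r n : ℝ) * (r n - 1) / n) atTop (nhds (t ^ 2)) := by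
  have hinv : Tendsto (fun n : ℕ ↦ (√n)⁻¹) atTop (nhds 0) :=
    tendsto_inv_atTop_zero.comp (Real.tendsto_sqrt_atTop.comp tendsto_natCast_atTop_atTop)
  have key := (h.pow 2).sub (h.mul hinv)
  rw [mul_zero, sub_zero] at key
  refine key.congr fun n ↦ ?_
  rw [div_pow, Real.sq_sqrt n.cast_nonneg, ← div_eq_mul_inv, div_div,
    Real.mul_self_sqrt n.cast_nonneg]
  ring

lemma tendsto_one_div_natCast_sub_one :
    Tendsto (fun n : ℕ ↦ 1 / ((n : ℝ) - 1)) atTop (nhds 0) :=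
  tendsto_const_nhds.div_atTop (tendsto_atTop_add_const_right _ (-1) tendsto_natCast_atTop_atTop)

theorem expected_alignments_limits_general (t : ℝ) (r : ℕ → ℕ)
    (hlim : Tendsto (fun n : ℕ => (r n : ℝ) / Real.sqrt n) atTop (nhds t)) :
    Tendsto (fun n : ℕ => rookExp n (r n) (fun f => WRC (r n) f + WCR (r n) f))
        atTop (nhds ((2/3) * t ^ 2)) ∧
    Tendsto (fun n : ℕ => rookExp n (r n) (fun f => WRR (r n) f + WRC (r n) f + WCR (r n) f))
        atTop (nhds ((4/3) * t ^ 2)) := by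
  have hpairs := tendsto_mul_sub_one_div_of_tendsto_div_sqrt hlim
  have hRC : Tendsto (fun n : ℕ ↦ 2 / 3 * ((r n : ℝ) * (r n - 1) / n) * (1 - 1 / ((n : ℝ) - 1)))
      atTop (nhds (2 / 3 * t ^ 2)) := by
    simpa using (hpairs.const_mul (2 / 3)).mul (tendsto_one_div_natCast_sub_one.const_sub 1)
  have hRR : Tendsto (fun n : ℕ ↦ 1 / 3 * ((r n : ℝ) * (r n - 1) / n) * (2 + 1 / ((n : ℝ) - 1)))
      atTop (nhds (2 / 3 * t ^ 2)) := by
    convert (hpairs.const_mul (1 / 3)).mul (tendsto_one_div_natCast_sub_one.const_add 2) using 2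
    ring
  refine ⟨hRC.congr' ?_, ?_⟩
  · filter_upwards [eventually_ge_atTop 2] with n hn using (rookExp_WRC_add_WCR hn _).symm
  · rw [show 4 / 3 * t ^ 2 = 2 / 3 * t ^ 2 + 2 / 3 * t ^ 2 by ring]
    refine (hRR.add hRC).congr' ?_
    filter_upwards [eventually_ge_atTop 2] with n hn
    simp_rw [add_assoc]
    rw [rookExp_add, rookExp_WRR hn, rookExp_WRC_add_WCR hn]

/-- if `r(n)/√n → t > 0` and `r(n)` rooks are placed independently and uniformly
at random on `B_n`, then the expected numbers of alignments satisfy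
`E(W_RC + W_CR) → (2/3)t²` and `E(W_RR + W_RC + W_CR) → (4/3)t²` as `n → ∞`. -/
theorem expected_alignments_limits (t : ℝ) (ht : 0 < t) (r : ℕ → ℕ)
    (hlim : Tendsto (fun n : ℕ => (r n : ℝ) / Real.sqrt n) atTop (nhds t)) :
    Tendsto (fun n : ℕ => rookExp n (r n) (fun f => WRC (r n) f + WCR (r n) f))
        atTop (nhds ((2/3) * t ^ 2)) ∧
    Tendsto (fun n : ℕ => rookExp n (r n) (fun f => WRR (r n) f + WRC (r n) f + WCR (r n) f))
        atTop (nhds ((4/3) * t ^ 2)) :=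
  expected_alignments_limits_general t r hlim
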